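/- Assume the smooth setting with L > 0 and M_g > 0. Run AdLagEx with the adaptive step sizes η_t := c₁L + c₂L_g·max_{0≤i≤t}‖λ^i‖, γ_t := η₀/η_t, θ_t := γ_{t−1}/γ_t, τ_t := βη_t, where c₁, c₂ > 0 satisfy c₁/3 ≥ c₁/c₂ + 1 and β := 12M_g²/(c₁²L²). Then for every T ≥ 1: (i) ‖λ^{t+1}‖ ≤ B := √(2/β)·‖x⁰−x*‖ + (√2+1)‖λ*‖ for all t ≥ 0; (ii) Γ_T·⟨F(x), x̄^T−x⟩ ≤ (c₁L/2)‖x−x⁰‖² for every x ∈ X̃; (iii) Γ_T·‖[g(x̄^T)]_+‖ ≤ (c₁L/2)‖x*−x⁰‖² + (βc₁L/2)(‖λ*‖+1)²; and (iv) Γ_T ≥ c₁L·T/(c₁L + c₂L_gB). -/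

import Mathlib

/-!
Both AdLagEx updates are prox steps, so each satisfies the three-point inequality. Scaled by `γ_t`
(for which `γ_t η_t = c₁L`, `γ_t τ_t = βc₁L` and `γ_{t+1} θ_{t+1} = γ_t`) and added up, they
telescope: the extrapolation in step `t + 1` cancels the operator error of step `t` paired with
the test point, and the errors paired with consecutive steps are absorbed by the squared step
lengths, because the adaptive `η_t` dominates the local Lipschitz constant `L + L_g ‖λ^t‖` of
`x ↦ F(x) + ∇g(x)λ^t` and `β` is tuned to `M_g`. This bounds the weighted sum of the gaps
`⟨F(y), x^{t+1} - y⟩ + ⟨l, g(x^{t+1})⟩ - ⟨λ^{t+1}, g(y)⟩` by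
`(c₁L/2)‖y - x⁰‖² + (βc₁L/2)‖l‖² - (βc₁L/4)‖l - λ^T‖²`. Testing with the KKT pair bounds the
multipliers, hence `η_t` and `Γ_T`; testing with `l = 0` gives the gap estimate, and testing with
`[g(x̄^T)]₊` rescaled to norm `‖λ*‖ + 1` gives the feasibility estimate, by Jensen's inequality for
the convex constraints.
-/

open scoped InnerProductSpace BigOperators

noncomputable section

/-- ℝ^k with the Euclidean norm. -/
abbrev Euc (k : ℕ) := EuclideanSpace ℝ (Fin k)

/-- `∇g(x) μ`, where `G j` is the j-th column of `∇g(x)`. -/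
def gradMul {m : ℕ} {E : Type*} [NormedAddCommGroup E] [InnerProductSpace ℝ E]
    (G : Fin m → E) (μ : Euc m) : E :=
  ∑ j, μ j • G j

/-- componentwise positive part `[v]₊`. -/
def posPart {m : ℕ} (v : Euc m) : Euc m :=
  (EuclideanSpace.equiv (Fin m) ℝ).symm fun j => max (v j) 0


open Filter Topology Finset

theorem nonneg_of_forall_mul_add_sq_nonneg {C D : ℝ}
    (h : ∀ α : ℝ, 0 < α → α < 1 → 0 ≤ α * C + α ^ 2 * D) : 0 ≤ C := by
  have hlim : Tendsto (fun α : ℝ => C + α * D) (𝓝[>] 0) (𝓝 C) := by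
    have : Tendsto (fun α : ℝ => C + α * D) (𝓝 0) (𝓝 (C + 0 * D)) :=
      (continuous_const.add (continuous_id.mul continuous_const)).tendsto 0
    simpa using this.mono_left nhdsWithin_le_nhds
  refine ge_of_tendsto hlim ?_
  filter_upwards [Ioo_mem_nhdsGT one_pos] with α ⟨hα0, hα1⟩
  refine nonneg_of_mul_nonneg_right ?_ hα0
  linear_combination h α hα0 hα1

theorem sum_le_of_extrapolation_steps {s c d P R : ℕ → ℝ} (hR : 0 ≤ R 0)
    (h0 : s 0 - c 0 ≤ P 0 - P 1 - R 0)
    (hstep : ∀ t, s (t + 1) - c (t + 1) + c t + d t ≤ P (t + 1) - P (t + 2) - R (t + 1))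
    (hd : ∀ t, -d t ≤ (R t + R (t + 1)) / 2) (hc : ∀ t, c t ≤ (R t + P (t + 1)) / 2) (T : ℕ) :
    ∑ i ∈ range (T + 1), s i ≤ P 0 - P (T + 1) / 2 := by
  have key : ∀ t, ∑ i ∈ range (t + 1), s i - c t + R t / 2 ≤ P 0 - P (t + 1) := by
    intro t
    induction t with
    | zero => simp only [zero_add, sum_range_one]; linarith
    | succ t ih => rw [sum_range_succ]; linarith [hstep t, hd t]
  linarith [key T, hc T]

theorem le_sqrt_mul_add_sqrt_mul {a b d β : ℝ} (hβ : 0 < β) (ha : 0 ≤ a) (hb : 0 ≤ b)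
    (h : d ^ 2 ≤ 2 / β * a ^ 2 + 2 * b ^ 2) : d ≤ √(2 / β) * a + √2 * b := by
  have e1 : √(2 / β) ^ 2 = 2 / β := Real.sq_sqrt (by positivity)
  have e2 : √2 ^ 2 = 2 := Real.sq_sqrt (by norm_num)
  have hcross : 0 ≤ √(2 / β) * a * (√2 * b) := by positivity
  refine abs_le_of_sq_le_sq' ?_ (by positivity) |>.2
  nlinarith

theorem mul_mul_le_of_sq_eq {M β H a b : ℝ} (hβ : 0 < β) (hH : 0 < H)
    (hM : 12 * M ^ 2 = β * H ^ 2) : M * a * b ≤ β * H / 4 * a ^ 2 + H / 12 * b ^ 2 := by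
  nlinarith [sq_nonneg (β * H * a - 2 * M * b), mul_pos hβ hH]

section InnerProductSpace

variable {E E' : Type*} [NormedAddCommGroup E] [InnerProductSpace ℝ E]
  [NormedAddCommGroup E'] [InnerProductSpace ℝ E']

theorem inner_sub_le_of_forall_prox_le {S : Set E} (hS : Convex ℝ S) {q x₀ p y : E} {e : ℝ}
    (hp : p ∈ S)
    (hmin : ∀ y ∈ S, ⟪q, p⟫_ℝ + e / 2 * ‖p - x₀‖ ^ 2 ≤ ⟪q, y⟫_ℝ + e / 2 * ‖y - x₀‖ ^ 2)
    (hy : y ∈ S) :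
    ⟪q, p - y⟫_ℝ ≤ e / 2 * (‖y - x₀‖ ^ 2 - ‖y - p‖ ^ 2 - ‖p - x₀‖ ^ 2) := by
  -- first-order optimality of `p` along the segment towards `y`
  have hVI : 0 ≤ ⟪q, y - p⟫_ℝ + e * ⟪p - x₀, y - p⟫_ℝ := by
    refine nonneg_of_forall_mul_add_sq_nonneg (D := e / 2 * ‖y - p‖ ^ 2) fun α hα0 hα1 => ?_
    have hmem : p + α • (y - p) ∈ S := by
      convert hS hp hy (sub_nonneg.2 hα1.le) hα0.le (by ring) using 1
      module
    have h := hmin _ hmem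
    rw [show p + α • (y - p) - x₀ = (p - x₀) + α • (y - p) by abel, norm_add_sq_real,
      norm_smul, inner_add_right, inner_smul_right, inner_smul_right, Real.norm_eq_abs,
      mul_pow, sq_abs] at h
    linear_combination h
  have hcos : ‖y - x₀‖ ^ 2 = ‖y - p‖ ^ 2 + 2 * ⟪y - p, p - x₀⟫_ℝ + ‖p - x₀‖ ^ 2 := by
    rw [← norm_add_sq_real, sub_add_sub_cancel]
  rw [hcos, ← neg_sub y p, inner_neg_right, real_inner_comm (p - x₀) (y - p)]
  linear_combination hVI

theorem sum_gap_le_of_extrapolated_prox {S : Set E} {K : Set E'} (hS : Convex ℝ S)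
    (hK : Convex ℝ K) {z : ℕ → E} {μ : ℕ → E'} {A Am : ℕ → E} {G Gm : ℕ → E'}
    {θ η τ γ : ℕ → ℝ} {H β : ℝ}
    (hz : ∀ t, z (t + 1) ∈ S) (hμ : ∀ t, μ (t + 1) ∈ K)
    (hAm0 : Am 0 = A 0) (hAm : ∀ t, Am (t + 1) = A t)
    (hGm0 : Gm 0 = G 0) (hGm : ∀ t, Gm (t + 1) = G t)
    (hzmin : ∀ t, ∀ y ∈ S,
      ⟪(1 + θ t) • A t - θ t • Am t, z (t + 1)⟫_ℝ + η t / 2 * ‖z (t + 1) - z t‖ ^ 2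
        ≤ ⟪(1 + θ t) • A t - θ t • Am t, y⟫_ℝ + η t / 2 * ‖y - z t‖ ^ 2)
    (hμmin : ∀ t, ∀ l ∈ K,
      ⟪-((1 + θ t) • G t - θ t • Gm t), μ (t + 1)⟫_ℝ + τ t / 2 * ‖μ (t + 1) - μ t‖ ^ 2
        ≤ ⟪-((1 + θ t) • G t - θ t • Gm t), l⟫_ℝ + τ t / 2 * ‖l - μ t‖ ^ 2)
    (hγ : ∀ t, 0 ≤ γ t) (hγη : ∀ t, γ t * η t = H) (hγτ : ∀ t, γ t * τ t = β * H)
    (hγθ : ∀ t, γ (t + 1) * θ (t + 1) = γ t)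
    (hcross : ∀ t (w : E) (ω : E'),
      |γ t * (⟪A (t + 1) - A t, w⟫_ℝ - ⟪G (t + 1) - G t, ω⟫_ℝ)|
        ≤ H / 4 * ‖z (t + 1) - z t‖ ^ 2 + β * H / 4 * ‖μ (t + 1) - μ t‖ ^ 2
          + H / 4 * ‖w‖ ^ 2 + β * H / 4 * ‖ω‖ ^ 2)
    {y : E} (hy : y ∈ S) {l : E'} (hl : l ∈ K) (T : ℕ) :
    ∑ i ∈ range (T + 1), γ i * (⟪A (i + 1), z (i + 1) - y⟫_ℝ - ⟪G (i + 1), μ (i + 1) - l⟫_ℝ)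
      ≤ H / 2 * ‖y - z 0‖ ^ 2 + β * H / 2 * ‖l - μ 0‖ ^ 2
        - (H / 4 * ‖y - z (T + 1)‖ ^ 2 + β * H / 4 * ‖l - μ (T + 1)‖ ^ 2) := by
  have hP t : γ t * ⟪(1 + θ t) • A t - θ t • Am t, z (t + 1) - y⟫_ℝ
      ≤ H / 2 * (‖y - z t‖ ^ 2 - ‖y - z (t + 1)‖ ^ 2 - ‖z (t + 1) - z t‖ ^ 2) := by
    rw [← hγη t, mul_div_assoc, mul_assoc]
    exact mul_le_mul_of_nonneg_left (inner_sub_le_of_forall_prox_le hS (hz t) (hzmin t) hy) (hγ t)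
  have hD t : γ t * ⟪-((1 + θ t) • G t - θ t • Gm t), μ (t + 1) - l⟫_ℝ
      ≤ β * H / 2 * (‖l - μ t‖ ^ 2 - ‖l - μ (t + 1)‖ ^ 2 - ‖μ (t + 1) - μ t‖ ^ 2) := by
    rw [← hγτ t, mul_div_assoc, mul_assoc]
    exact mul_le_mul_of_nonneg_left (inner_sub_le_of_forall_prox_le hK (hμ t) (hμmin t) hl) (hγ t)
  have key := sum_le_of_extrapolation_steps
    (s := fun t => γ t * (⟪A (t + 1), z (t + 1) - y⟫_ℝ - ⟪G (t + 1), μ (t + 1) - l⟫_ℝ))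
    (c := fun t => γ t * (⟪A (t + 1) - A t, z (t + 1) - y⟫_ℝ
      - ⟪G (t + 1) - G t, μ (t + 1) - l⟫_ℝ))
    (d := fun t => γ t * (⟪A (t + 1) - A t, z (t + 2) - z (t + 1)⟫_ℝ
      - ⟪G (t + 1) - G t, μ (t + 2) - μ (t + 1)⟫_ℝ))
    (P := fun t => H / 2 * ‖y - z t‖ ^ 2 + β * H / 2 * ‖l - μ t‖ ^ 2)
    (R := fun t => H / 2 * ‖z (t + 1) - z t‖ ^ 2 + β * H / 2 * ‖μ (t + 1) - μ t‖ ^ 2)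
    ?_ ?_ ?_ ?_ ?_ T
  · linear_combination key
  · have h00 := hcross 0 0 0
    simp only [inner_zero_right, sub_zero, mul_zero, abs_zero, norm_zero] at h00
    linarith
  · have hP0 := hP 0
    have hD0 := hD 0
    rw [hAm0] at hP0
    rw [hGm0] at hD0
    simp only [inner_sub_left, inner_sub_right, inner_neg_left, real_inner_smul_left] at hP0 hD0 ⊢
    linear_combination hP0 + hD0
  · intro t
    have hP1 := hP (t + 1)
    have hD1 := hD (t + 1)
    rw [hAm] at hP1
    rw [hGm] at hD1
    simp only [← hγθ t]
    simp only [inner_sub_left, inner_sub_right, inner_neg_left, real_inner_smul_left] at hP1 hD1 ⊢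
    linear_combination hP1 + hD1
  · intro t
    linarith [neg_abs_le (γ t * (⟪A (t + 1) - A t, z (t + 2) - z (t + 1)⟫_ℝ
      - ⟪G (t + 1) - G t, μ (t + 2) - μ (t + 1)⟫_ℝ)),
      hcross t (z (t + 2) - z (t + 1)) (μ (t + 2) - μ (t + 1))]
  · intro t
    have := hcross t (z (t + 1) - y) (μ (t + 1) - l)
    rw [norm_sub_rev (z (t + 1)) y, norm_sub_rev (μ (t + 1)) l] at this
    linarith [le_abs_self (γ t * (⟪A (t + 1) - A t, z (t + 1) - y⟫_ℝ
      - ⟪G (t + 1) - G t, μ (t + 1) - l⟫_ℝ))]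

theorem abs_mul_inner_sub_inner_le {a w : E} {b ω : E'} {γ η ℓ M H β u v : ℝ}
    (hH : 0 < H) (hβ : 0 < β) (hM : 0 ≤ M) (hMβ : 12 * M ^ 2 = β * H ^ 2)
    (hγ : 0 ≤ γ) (hγη : γ * η = H) (hHη : H ≤ η) (hℓη : 3 * ℓ ≤ η) (hu : 0 ≤ u) (hv : 0 ≤ v)
    (ha : ‖a‖ ≤ ℓ * u + M * v) (hb : ‖b‖ ≤ M * u) :
    |γ * (⟪a, w⟫_ℝ - ⟪b, ω⟫_ℝ)|
      ≤ H / 4 * u ^ 2 + β * H / 4 * v ^ 2 + H / 4 * ‖w‖ ^ 2 + β * H / 4 * ‖ω‖ ^ 2 := by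
  have hγ1 : γ ≤ 1 := by nlinarith
  have hγℓ : γ * ℓ ≤ H / 3 := by nlinarith [mul_le_mul_of_nonneg_left hℓη hγ]
  have hCS : |γ * (⟪a, w⟫_ℝ - ⟪b, ω⟫_ℝ)|
      ≤ γ * ℓ * (u * ‖w‖) + γ * (M * v * ‖w‖) + γ * (M * ‖ω‖ * u) := by
    rw [abs_mul, abs_of_nonneg hγ]
    calc γ * |⟪a, w⟫_ℝ - ⟪b, ω⟫_ℝ| ≤ γ * (‖a‖ * ‖w‖ + ‖b‖ * ‖ω‖) := by
          gcongr
          exact (abs_sub _ _).trans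
            (add_le_add (abs_real_inner_le_norm _ _) (abs_real_inner_le_norm _ _))
      _ ≤ γ * ((ℓ * u + M * v) * ‖w‖ + M * u * ‖ω‖) := by gcongr
      _ = _ := by ring
  have h1 : γ * ℓ * (u * ‖w‖) ≤ H / 6 * u ^ 2 + H / 6 * ‖w‖ ^ 2 := by
    nlinarith [mul_le_mul_of_nonneg_right hγℓ (mul_nonneg hu (norm_nonneg w)),
      sq_nonneg (u - ‖w‖)]
  have h2 : γ * (M * v * ‖w‖) ≤ β * H / 4 * v ^ 2 + H / 12 * ‖w‖ ^ 2 :=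
    (mul_le_of_le_one_left (by positivity) hγ1).trans (mul_mul_le_of_sq_eq hβ hH hMβ)
  have h3 : γ * (M * ‖ω‖ * u) ≤ β * H / 4 * ‖ω‖ ^ 2 + H / 12 * u ^ 2 :=
    (mul_le_of_le_one_left (by positivity) hγ1).trans (mul_mul_le_of_sq_eq hβ hH hMβ)
  linarith

end InnerProductSpace

section Orthant

variable {m : ℕ}

theorem euc_inner_eq_sum (a b : Euc m) : ⟪a, b⟫_ℝ = ∑ j, a j * b j := by
  simp [PiLp.inner_apply, mul_comm]

theorem inner_posPart_self (v : Euc m) : ⟪posPart v, v⟫_ℝ = ‖posPart v‖ ^ 2 := by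
  rw [← real_inner_self_eq_norm_sq, euc_inner_eq_sum, euc_inner_eq_sum]
  refine sum_congr rfl fun j _ => ?_
  change max (v j) 0 * v j = max (v j) 0 * max (v j) 0
  rcases le_total (v j) 0 with h | h <;> simp [h]

theorem inner_le_inner_posPart {μ : Euc m} (hμ : ∀ j, 0 ≤ μ j) (v : Euc m) :
    ⟪μ, v⟫_ℝ ≤ ⟪μ, posPart v⟫_ℝ := by
  rw [euc_inner_eq_sum, euc_inner_eq_sum]
  exact sum_le_sum fun j _ => mul_le_mul_of_nonneg_left (le_max_left _ _) (hμ j)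

theorem inner_nonpos_of_nonneg_of_nonpos {μ v : Euc m} (hμ : ∀ j, 0 ≤ μ j)
    (hv : ∀ j, v j ≤ 0) : ⟪μ, v⟫_ℝ ≤ 0 := by
  rw [euc_inner_eq_sum]
  exact sum_nonpos fun j _ => mul_nonpos_of_nonneg_of_nonpos (hμ j) (hv j)

theorem convex_nonneg_orthant : Convex ℝ {v : Euc m | ∀ j, 0 ≤ v j} := by
  intro u hu v hv a b ha hb _ j
  change 0 ≤ a * u j + b * v j
  have := hu j
  have := hv j
  positivity

theorem nonpos_and_inner_eq_zero_of_forall_inner_le {lamstar v : Euc m}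
    (hlamstar : ∀ j, 0 ≤ lamstar j)
    (h : ∀ l : Euc m, (∀ j, 0 ≤ l j) → ⟪l, v⟫_ℝ ≤ ⟪lamstar, v⟫_ℝ) :
    (∀ j, v j ≤ 0) ∧ ⟪lamstar, v⟫_ℝ = 0 := by
  have hv j : v j ≤ 0 := by
    have hl : ∀ k, 0 ≤ (lamstar + EuclideanSpace.single j (1 : ℝ)) k := fun k => by
      simp only [PiLp.add_apply, EuclideanSpace.single, PiLp.single_apply]
      split_ifs <;> linarith [hlamstar k]
    have := h _ hl
    rw [inner_add_left, EuclideanSpace.inner_single_left] at this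
    simpa using this
  refine ⟨hv, le_antisymm (inner_nonpos_of_nonneg_of_nonpos hlamstar hv) ?_⟩
  simpa using h 0 fun _ => le_rfl

end Orthant

section Lagrangian

variable {m : ℕ} {E : Type*} [NormedAddCommGroup E] [InnerProductSpace ℝ E] {X : Set E}
  {F : E → E} {g : E → Euc m} {Gg : E → Fin m → E}

theorem gradMul_sub (G : Fin m → E) (μ ν : Euc m) :
    gradMul G μ - gradMul G ν = gradMul G (μ - ν) := by
  simp only [gradMul, ← sum_sub_distrib, ← sub_smul]
  rfl

theorem inner_add_inner_gradMul_le {p u : E} {μ : Euc m} (hμ : ∀ j, 0 ≤ μ j)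
    (hg : ∀ j, g p j + ⟪Gg p j, u - p⟫_ℝ ≤ g u j) :
    ⟪μ, g p⟫_ℝ + ⟪gradMul (Gg p) μ, u - p⟫_ℝ ≤ ⟪μ, g u⟫_ℝ := by
  simp only [gradMul, sum_inner, real_inner_smul_left, euc_inner_eq_sum, ← sum_add_distrib,
    ← mul_add]
  exact sum_le_sum fun j _ => mul_le_mul_of_nonneg_left (hg j) (hμ j)

theorem norm_lagrangian_grad_sub_le {L Mg Lg : ℝ}
    (hFlip : ∀ x₁ ∈ X, ∀ x₂ ∈ X, ‖F x₁ - F x₂‖ ≤ L * ‖x₁ - x₂‖)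
    (hGgbd : ∀ x ∈ X, ∀ μ : Euc m, ‖gradMul (Gg x) μ‖ ≤ Mg * ‖μ‖)
    (hGglip : ∀ x₁ ∈ X, ∀ x₂ ∈ X, ∀ μ : Euc m,
      ‖gradMul (Gg x₁) μ - gradMul (Gg x₂) μ‖ ≤ Lg * ‖μ‖ * ‖x₁ - x₂‖)
    {x₁ x₂ : E} (hx₁ : x₁ ∈ X) (hx₂ : x₂ ∈ X) (μ₁ μ₂ : Euc m) :
    ‖(F x₁ + gradMul (Gg x₁) μ₁) - (F x₂ + gradMul (Gg x₂) μ₂)‖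
      ≤ (L + Lg * ‖μ₂‖) * ‖x₁ - x₂‖ + Mg * ‖μ₁ - μ₂‖ := by
  have hsplit : (F x₁ + gradMul (Gg x₁) μ₁) - (F x₂ + gradMul (Gg x₂) μ₂)
      = (F x₁ - F x₂) + (gradMul (Gg x₁) μ₂ - gradMul (Gg x₂) μ₂)
        + gradMul (Gg x₁) (μ₁ - μ₂) := by
    rw [← gradMul_sub]; abel
  rw [hsplit]
  calc _ ≤ ‖F x₁ - F x₂‖ + ‖gradMul (Gg x₁) μ₂ - gradMul (Gg x₂) μ₂‖
        + ‖gradMul (Gg x₁) (μ₁ - μ₂)‖ := norm_add₃_le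
    _ ≤ L * ‖x₁ - x₂‖ + Lg * ‖μ₂‖ * ‖x₁ - x₂‖ + Mg * ‖μ₁ - μ₂‖ := by
      gcongr
      exacts [hFlip _ hx₁ _ hx₂, hGglip _ hx₁ _ hx₂ _, hGgbd _ hx₁ _]
    _ = _ := by ring

theorem gap_le_inner_lagrangian_grad
    (hFmono : ∀ x₁ ∈ X, ∀ x₂ ∈ X, 0 ≤ ⟪F x₁ - F x₂, x₁ - x₂⟫_ℝ)
    (hgconv : ∀ x ∈ X, ∀ y ∈ X, ∀ j, g x j + ⟪Gg x j, y - x⟫_ℝ ≤ g y j)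
    {u z : E} (hu : u ∈ X) (hz : z ∈ X) {μ : Euc m} (hμ : ∀ j, 0 ≤ μ j) (l : Euc m) :
    ⟪F z, u - z⟫_ℝ + ⟪l, g u⟫_ℝ - ⟪μ, g z⟫_ℝ
      ≤ ⟪F u + gradMul (Gg u) μ, u - z⟫_ℝ - ⟪g u, μ - l⟫_ℝ := by
  have hF := hFmono u hu z hz
  have hg := inner_add_inner_gradMul_le hμ (hgconv u hu z hz)
  rw [← neg_sub u z, inner_neg_right] at hg
  rw [inner_sub_left] at hF
  rw [inner_add_left, inner_sub_right (g u), real_inner_comm μ (g u), real_inner_comm l (g u)]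
  linarith

theorem feasible_and_gap_nonneg_of_saddle {xstar : E} {lamstar : Euc m}
    (hlamstar : ∀ j, 0 ≤ lamstar j)
    (hsaddle₁ : ∀ x ∈ X,
      ⟪F xstar, xstar⟫_ℝ + ⟪lamstar, g xstar⟫_ℝ ≤ ⟪F xstar, x⟫_ℝ + ⟪lamstar, g x⟫_ℝ)
    (hsaddle₂ : ∀ l : Euc m, (∀ j, 0 ≤ l j) → ⟪l, g xstar⟫_ℝ ≤ ⟪lamstar, g xstar⟫_ℝ) :
    (∀ j, g xstar j ≤ 0) ∧ ∀ u ∈ X, 0 ≤ ⟪F xstar, u - xstar⟫_ℝ + ⟪lamstar, g u⟫_ℝ := by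
  obtain ⟨hfeas, hcompl⟩ := nonpos_and_inner_eq_zero_of_forall_inner_le hlamstar hsaddle₂
  refine ⟨hfeas, fun u hu => ?_⟩
  have := hsaddle₁ u hu
  rw [inner_sub_right]
  linarith

end Lagrangian

section CenterMass

variable {ι E : Type*} [NormedAddCommGroup E] [InnerProductSpace ℝ E] {s : Finset ι}
  {w : ι → ℝ} {u : ι → E}

theorem sum_mul_inner_sub_eq (hw : ∑ i ∈ s, w i ≠ 0) (v z : E) :
    ∑ i ∈ s, w i * ⟪v, u i - z⟫_ℝ = (∑ i ∈ s, w i) * ⟪v, s.centerMass w u - z⟫_ℝ := by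
  simp only [Finset.centerMass, inner_sub_right, real_inner_smul_right, inner_sum, mul_sub,
    sum_sub_distrib, ← sum_mul, ← mul_assoc, mul_inv_cancel₀ hw, one_mul]

theorem mul_le_sum_of_forall_add_inner_le {f : E → ℝ} {d : E} (hw : ∀ i ∈ s, 0 ≤ w i)
    (hW : ∑ i ∈ s, w i ≠ 0)
    (h : ∀ i ∈ s, f (s.centerMass w u) + ⟪d, u i - s.centerMass w u⟫_ℝ ≤ f (u i)) :
    (∑ i ∈ s, w i) * f (s.centerMass w u) ≤ ∑ i ∈ s, w i * f (u i) := by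
  calc (∑ i ∈ s, w i) * f (s.centerMass w u)
      = ∑ i ∈ s, w i * (f (s.centerMass w u) + ⟪d, u i - s.centerMass w u⟫_ℝ) := by
        have hd := sum_mul_inner_sub_eq (u := u) hW d (s.centerMass w u)
        rw [sub_self, inner_zero_right, mul_zero] at hd
        rw [sum_mul]
        simp only [mul_add, sum_add_distrib, hd, add_zero]
    _ ≤ _ := sum_le_sum fun i hi => mul_le_mul_of_nonneg_left (h i hi) (hw i hi)

end CenterMass

theorem three_le_of_div_add_one_le {c₁ c₂ : ℝ} (hc₁ : 0 < c₁) (hc₂ : 0 < c₂)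
    (hc : c₁ / c₂ + 1 ≤ c₁ / 3) : 3 ≤ c₁ ∧ 3 ≤ c₂ := by
  have hpos : 0 < c₁ / c₂ := div_pos hc₁ hc₂
  refine ⟨by linarith, le_of_not_gt fun h => ?_⟩
  linarith [div_lt_div_of_pos_left hc₁ hc₂ h]

theorem adaptive_stepsize_bounds {c₁ c₂ L Lg : ℝ} {r η : ℕ → ℝ} (hc₁ : 3 ≤ c₁) (hc₂ : 3 ≤ c₂)
    (hL : 0 ≤ L) (hLg : 0 ≤ Lg) (hr : ∀ i, 0 ≤ r i)
    (hη : ∀ t, η t = c₁ * L + c₂ * Lg * (range (t + 1)).sup' nonempty_range_add_one r)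
    (t : ℕ) : c₁ * L ≤ η t ∧ 3 * (L + Lg * r t) ≤ η t := by
  have hsup : r t ≤ (range (t + 1)).sup' nonempty_range_add_one r :=
    le_sup' r (self_mem_range_succ t)
  have h1 := mul_le_mul_of_nonneg_left hsup (mul_nonneg (by linarith : (0 : ℝ) ≤ c₂) hLg)
  have h2 := mul_le_mul_of_nonneg_right hc₁ hL
  have h3 := mul_le_mul_of_nonneg_right hc₂ (mul_nonneg hLg (hr t))
  have h4 := mul_nonneg hLg (hr t)
  rw [hη t]
  constructor <;> nlinarith

theorem mul_div_add_le_sum {γ η : ℕ → ℝ} {H K : ℝ} (hH : 0 < H) (hγη : ∀ t, γ t * η t = H)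
    (hη : ∀ t, H ≤ η t) (hηK : ∀ t, η t ≤ H + K) (T : ℕ) :
    H * T / (H + K) ≤ ∑ t ∈ range T, γ t := by
  have hγK t : H / (H + K) ≤ γ t := by
    rw [eq_div_of_mul_eq (hH.trans_le (hη t)).ne' (hγη t)]
    exact div_le_div_of_nonneg_left hH.le (hH.trans_le (hη t)) (hηK t)
  calc H * T / (H + K) = T • (H / (H + K)) := by rw [nsmul_eq_mul]; ring
    _ ≤ ∑ t ∈ range T, γ t := by
      simpa using card_nsmul_le_sum (range T) γ _ fun t _ => hγK t

section AdLagEx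

variable {m : ℕ} {E : Type*} [NormedAddCommGroup E] [InnerProductSpace ℝ E]

/-- `xm t`, `lamm t` play the roles of `x^{t-1}`, `λ^{t-1}` (with `x⁻¹ = x⁰`, `λ⁻¹ = λ⁰`). -/
structure IsAdLagExRun (X : Set E) (F : E → E) (g : E → Euc m) (Gg : E → Fin m → E)
    (θ η τ : ℕ → ℝ) (x xm : ℕ → E) (lam lamm : ℕ → Euc m) : Prop where
  x_zero_mem : x 0 ∈ X
  x_succ_mem : ∀ t, x (t + 1) ∈ X
  xm_zero : xm 0 = x 0
  xm_succ : ∀ t, xm (t + 1) = x t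
  lam_zero : lam 0 = 0
  lam_succ_nonneg : ∀ t j, 0 ≤ lam (t + 1) j
  lamm_zero : lamm 0 = lam 0
  lamm_succ : ∀ t, lamm (t + 1) = lam t
  lam_min : ∀ t, ∀ l : Euc m, (∀ j, 0 ≤ l j) →
    ⟪-((1 + θ t) • g (x t) - θ t • g (xm t)), lam (t + 1)⟫_ℝ
        + τ t / 2 * ‖lam (t + 1) - lam t‖ ^ 2
      ≤ ⟪-((1 + θ t) • g (x t) - θ t • g (xm t)), l⟫_ℝ + τ t / 2 * ‖l - lam t‖ ^ 2
  x_min : ∀ t, ∀ y ∈ X,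
    ⟪(1 + θ t) • (F (x t) + gradMul (Gg (x t)) (lam t))
        - θ t • (F (xm t) + gradMul (Gg (xm t)) (lamm t)), x (t + 1)⟫_ℝ
        + η t / 2 * ‖x (t + 1) - x t‖ ^ 2
      ≤ ⟪(1 + θ t) • (F (x t) + gradMul (Gg (x t)) (lam t))
        - θ t • (F (xm t) + gradMul (Gg (xm t)) (lamm t)), y⟫_ℝ
        + η t / 2 * ‖y - x t‖ ^ 2

variable {X : Set E} {F : E → E} {g : E → Euc m} {Gg : E → Fin m → E} {θ η τ : ℕ → ℝ}
  {x xm : ℕ → E} {lam lamm : ℕ → Euc m}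

theorem IsAdLagExRun.x_mem (run : IsAdLagExRun X F g Gg θ η τ x xm lam lamm) (t : ℕ) :
    x t ∈ X :=
  t.casesOn run.x_zero_mem run.x_succ_mem

theorem IsAdLagExRun.sum_gap_le (run : IsAdLagExRun X F g Gg θ η τ x xm lam lamm)
    (hXconv : Convex ℝ X) (hFmono : ∀ x₁ ∈ X, ∀ x₂ ∈ X, 0 ≤ ⟪F x₁ - F x₂, x₁ - x₂⟫_ℝ)
    (hgconv : ∀ x ∈ X, ∀ y ∈ X, ∀ j, g x j + ⟪Gg x j, y - x⟫_ℝ ≤ g y j)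
    {γ : ℕ → ℝ} {H β : ℝ} (hH : 0 ≤ H) (hγ : ∀ t, 0 ≤ γ t) (hγη : ∀ t, γ t * η t = H)
    (hγτ : ∀ t, γ t * τ t = β * H) (hγθ : ∀ t, γ (t + 1) * θ (t + 1) = γ t)
    (hcross : ∀ t (w : E) (ω : Euc m),
      |γ t * (⟪(F (x (t + 1)) + gradMul (Gg (x (t + 1))) (lam (t + 1)))
          - (F (x t) + gradMul (Gg (x t)) (lam t)), w⟫_ℝ - ⟪g (x (t + 1)) - g (x t), ω⟫_ℝ)|
        ≤ H / 4 * ‖x (t + 1) - x t‖ ^ 2 + β * H / 4 * ‖lam (t + 1) - lam t‖ ^ 2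
          + H / 4 * ‖w‖ ^ 2 + β * H / 4 * ‖ω‖ ^ 2)
    (T : ℕ) {y : E} (hy : y ∈ X) {l : Euc m} (hl : ∀ j, 0 ≤ l j) :
    ∑ i ∈ range (T + 1),
        γ i * (⟪F y, x (i + 1) - y⟫_ℝ + ⟪l, g (x (i + 1))⟫_ℝ - ⟪lam (i + 1), g y⟫_ℝ)
      + β * H / 4 * ‖l - lam (T + 1)‖ ^ 2
      ≤ H / 2 * ‖y - x 0‖ ^ 2 + β * H / 2 * ‖l‖ ^ 2 := by
  have hmaster := sum_gap_le_of_extrapolated_prox (K := {v : Euc m | ∀ j, 0 ≤ v j})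
    (A := fun t => F (x t) + gradMul (Gg (x t)) (lam t))
    (Am := fun t => F (xm t) + gradMul (Gg (xm t)) (lamm t))
    (G := fun t => g (x t)) (Gm := fun t => g (xm t))
    hXconv convex_nonneg_orthant run.x_succ_mem run.lam_succ_nonneg
    (by simp only [run.xm_zero, run.lamm_zero]) (fun t => by simp only [run.xm_succ, run.lamm_succ])
    (by simp only [run.xm_zero]) (fun t => by simp only [run.xm_succ])
    run.x_min run.lam_min hγ hγη hγτ hγθ hcross hy hl T
  rw [run.lam_zero, sub_zero] at hmaster
  have hterm := sum_le_sum fun i (_ : i ∈ range (T + 1)) => mul_le_mul_of_nonneg_left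
    (gap_le_inner_lagrangian_grad hFmono hgconv (run.x_succ_mem i) hy (run.lam_succ_nonneg i) l)
    (hγ i)
  nlinarith [sq_nonneg ‖y - x (T + 1)‖]

end AdLagEx

section Ergodic

variable {m : ℕ} {E : Type*} [NormedAddCommGroup E] [InnerProductSpace ℝ E] {X : Set E}
  {F : E → E} {g : E → Euc m} {x : ℕ → E} {lam : ℕ → Euc m} {γ : ℕ → ℝ} {H β : ℝ}
  (hH : 0 < H) (hβ : 0 < β) (hγ : ∀ t, 0 < γ t) (hlamPos : ∀ t j, 0 ≤ lam (t + 1) j)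
  (hgap : ∀ T, ∀ y ∈ X, ∀ l : Euc m, (∀ j, 0 ≤ l j) →
    ∑ i ∈ range (T + 1),
        γ i * (⟪F y, x (i + 1) - y⟫_ℝ + ⟪l, g (x (i + 1))⟫_ℝ - ⟪lam (i + 1), g y⟫_ℝ)
      + β * H / 4 * ‖l - lam (T + 1)‖ ^ 2
      ≤ H / 2 * ‖y - x 0‖ ^ 2 + β * H / 2 * ‖l‖ ^ 2)
include hH hβ hγ hlamPos hgap

theorem norm_multiplier_le (hxS : ∀ t, x (t + 1) ∈ X) {xstar : E} {lamstar : Euc m}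
    (hxstar : xstar ∈ X) (hlamstar : ∀ j, 0 ≤ lamstar j) (hgstar : ∀ j, g xstar j ≤ 0)
    (hsaddle : ∀ u ∈ X, 0 ≤ ⟪F xstar, u - xstar⟫_ℝ + ⟪lamstar, g u⟫_ℝ) (t : ℕ) :
    ‖lam (t + 1)‖ ≤ √(2 / β) * ‖x 0 - xstar‖ + (√2 + 1) * ‖lamstar‖ := by
  have hsum : 0 ≤ ∑ i ∈ range (t + 1), γ i * (⟪F xstar, x (i + 1) - xstar⟫_ℝ
      + ⟪lamstar, g (x (i + 1))⟫_ℝ - ⟪lam (i + 1), g xstar⟫_ℝ) :=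
    sum_nonneg fun i _ => mul_nonneg (hγ i).le <| by
      linarith [hsaddle _ (hxS i), inner_nonpos_of_nonneg_of_nonpos (hlamPos i) hgstar]
  have hsq : β * H / 4 * ‖lamstar - lam (t + 1)‖ ^ 2
      ≤ β * H / 4 * (2 / β * ‖x 0 - xstar‖ ^ 2 + 2 * ‖lamstar‖ ^ 2) := by
    have e : β * H / 4 * (2 / β * ‖x 0 - xstar‖ ^ 2 + 2 * ‖lamstar‖ ^ 2)
        = H / 2 * ‖xstar - x 0‖ ^ 2 + β * H / 2 * ‖lamstar‖ ^ 2 := by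
      rw [norm_sub_rev]; field_simp; ring
    linarith [hgap t xstar hxstar lamstar hlamstar]
  have hd := le_sqrt_mul_add_sqrt_mul hβ (norm_nonneg _) (norm_nonneg _)
    (le_of_mul_le_mul_left hsq (by positivity))
  linarith [norm_le_norm_add_norm_sub' (lam (t + 1)) lamstar, norm_sub_rev lamstar (lam (t + 1))]

theorem mul_inner_centerMass_sub_le {T : ℕ} (hT : 1 ≤ T) {z : E} (hz : z ∈ X)
    (hgz : ∀ j, g z j ≤ 0) :
    (∑ t ∈ range T, γ t) * ⟪F z, (range T).centerMass γ (fun t => x (t + 1)) - z⟫_ℝ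
      ≤ H / 2 * ‖z - x 0‖ ^ 2 := by
  obtain ⟨T, rfl⟩ : ∃ T', T = T' + 1 := ⟨T - 1, by omega⟩
  have hΓ : 0 < ∑ t ∈ range (T + 1), γ t := sum_pos (fun i _ => hγ i) nonempty_range_add_one
  have hterm i : γ i * ⟪F z, x (i + 1) - z⟫_ℝ ≤ γ i * (⟪F z, x (i + 1) - z⟫_ℝ
      + ⟪(0 : Euc m), g (x (i + 1))⟫_ℝ - ⟪lam (i + 1), g z⟫_ℝ) := by
    rw [inner_zero_left, add_zero]
    exact mul_le_mul_of_nonneg_left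
      (by linarith [inner_nonpos_of_nonneg_of_nonpos (hlamPos i) hgz]) (hγ i).le
  have := hgap T z hz 0 fun _ => le_rfl
  rw [← sum_mul_inner_sub_eq hΓ.ne']
  simp only [norm_zero, zero_sub, norm_neg] at this
  nlinarith [sum_le_sum fun i (_ : i ∈ range (T + 1)) => hterm i,
    sq_nonneg ‖lam (T + 1)‖, mul_pos hβ hH]

theorem mul_norm_posPart_centerMass_le (hXconv : Convex ℝ X) (hxS : ∀ t, x (t + 1) ∈ X)
    {Gg : E → Fin m → E} (hgconv : ∀ x ∈ X, ∀ y ∈ X, ∀ j, g x j + ⟪Gg x j, y - x⟫_ℝ ≤ g y j)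
    {xstar : E} {lamstar : Euc m} (hxstar : xstar ∈ X) (hlamstar : ∀ j, 0 ≤ lamstar j)
    (hgstar : ∀ j, g xstar j ≤ 0)
    (hsaddle : ∀ u ∈ X, 0 ≤ ⟪F xstar, u - xstar⟫_ℝ + ⟪lamstar, g u⟫_ℝ) {T : ℕ} (hT : 1 ≤ T) :
    (∑ t ∈ range T, γ t) * ‖posPart (g ((range T).centerMass γ fun t => x (t + 1)))‖
      ≤ H / 2 * ‖xstar - x 0‖ ^ 2 + β * H / 2 * (‖lamstar‖ + 1) ^ 2 := by
  obtain ⟨T, rfl⟩ : ∃ T', T = T' + 1 := ⟨T - 1, by omega⟩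
  set xb := (range (T + 1)).centerMass γ fun t => x (t + 1)
  set N := ‖posPart (g xb)‖
  have hΓ : 0 < ∑ t ∈ range (T + 1), γ t := sum_pos (fun i _ => hγ i) nonempty_range_add_one
  have hxb : xb ∈ X := hXconv.centerMass_mem (fun i _ => (hγ i).le) hΓ fun i _ => hxS i
  rcases (norm_nonneg _ : 0 ≤ N).eq_or_lt with hN | hN
  · rw [show N = 0 from hN.symm, mul_zero]; positivity
  -- of `⟪lh, g xb⟫ = (‖λ*‖ + 1) N`, the saddle inequality at `xb` absorbs `‖λ*‖ N`, leaving `N`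
  set lh : Euc m := ((‖lamstar‖ + 1) / N) • posPart (g xb)
  have hlh j : 0 ≤ lh j := mul_nonneg (by positivity) (le_max_right _ _)
  have hlh_norm : ‖lh‖ = ‖lamstar‖ + 1 := by
    rw [norm_smul, Real.norm_eq_abs, abs_of_nonneg (by positivity), div_mul_cancel₀ _ hN.ne']
  have hlh_g : ⟪lh, g xb⟫_ℝ = (‖lamstar‖ + 1) * N := by
    rw [real_inner_smul_left, inner_posPart_self]
    change (‖lamstar‖ + 1) / N * N ^ 2 = _
    field_simp
  have hjensen := mul_le_sum_of_forall_add_inner_le (f := fun v => ⟪lh, g v⟫_ℝ)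
    (d := gradMul (Gg xb) lh) (fun i _ => (hγ i).le) hΓ.ne'
    fun i _ => inner_add_inner_gradMul_le hlh (hgconv xb hxb _ (hxS i))
  have hstar : -(‖lamstar‖ * N) ≤ ⟪F xstar, xb - xstar⟫_ℝ := by
    linarith [hsaddle xb hxb, inner_le_inner_posPart hlamstar (g xb),
      real_inner_le_norm lamstar (posPart (g xb))]
  have hterm i : γ i * ⟪F xstar, x (i + 1) - xstar⟫_ℝ + γ i * ⟪lh, g (x (i + 1))⟫_ℝ
      ≤ γ i * (⟪F xstar, x (i + 1) - xstar⟫_ℝ + ⟪lh, g (x (i + 1))⟫_ℝ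
        - ⟪lam (i + 1), g xstar⟫_ℝ) := by
    nlinarith [inner_nonpos_of_nonneg_of_nonpos (hlamPos i) hgstar, hγ i]
  have hsum := sum_le_sum fun i (_ : i ∈ range (T + 1)) => hterm i
  rw [sum_add_distrib, sum_mul_inner_sub_eq hΓ.ne'] at hsum
  have := hgap T xstar hxstar lh hlh
  rw [hlh_norm] at this
  nlinarith [mul_le_mul_of_nonneg_left hstar hΓ.le, mul_pos hβ hH,
    sq_nonneg ‖lh - lam (T + 1)‖]

end Ergodic

theorem adlagex_convergence_general
    {n m : ℕ}
    (X : Set (Euc n)) (hXconv : Convex ℝ X)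
    -- smooth monotone operator
    (F : Euc n → Euc n) (L : ℝ) (hLpos : 0 < L)
    (hFmono : ∀ x₁ ∈ X, ∀ x₂ ∈ X, 0 ≤ ⟪F x₁ - F x₂, x₁ - x₂⟫_ℝ)
    (hFlip : ∀ x₁ ∈ X, ∀ x₂ ∈ X, ‖F x₁ - F x₂‖ ≤ L * ‖x₁ - x₂‖)
    -- smooth convex constraints
    (g : Euc n → Euc m) (Gg : Euc n → Fin m → Euc n)
    (Mg Lg : ℝ) (hMgpos : 0 < Mg) (hLg : 0 ≤ Lg)
    (hgconv : ∀ x ∈ X, ∀ y ∈ X, ∀ j, g x j + ⟪Gg x j, y - x⟫_ℝ ≤ g y j)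
    (hglip : ∀ x₁ ∈ X, ∀ x₂ ∈ X, ‖g x₁ - g x₂‖ ≤ Mg * ‖x₁ - x₂‖)
    (hGgbd : ∀ x ∈ X, ∀ μ : Euc m, ‖gradMul (Gg x) μ‖ ≤ Mg * ‖μ‖)
    (hGglip : ∀ x₁ ∈ X, ∀ x₂ ∈ X, ∀ μ : Euc m,
      ‖gradMul (Gg x₁) μ - gradMul (Gg x₂) μ‖ ≤ Lg * ‖μ‖ * ‖x₁ - x₂‖)
    -- KKT pair
    (xstar : Euc n) (lamstar : Euc m) (hxstar : xstar ∈ X) (hlamstar : ∀ j, 0 ≤ lamstar j)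
    (hsaddle₁ : ∀ x ∈ X,
      ⟪F xstar, xstar⟫_ℝ + ⟪lamstar, g xstar⟫_ℝ ≤ ⟪F xstar, x⟫_ℝ + ⟪lamstar, g x⟫_ℝ)
    (hsaddle₂ : ∀ lam' : Euc m, (∀ j, 0 ≤ lam' j) →
      ⟪lam', g xstar⟫_ℝ ≤ ⟪lamstar, g xstar⟫_ℝ)
    -- adaptive step-size policy
    (c₁ c₂ : ℝ) (hc₁ : 0 < c₁) (hc₂ : 0 < c₂) (hc : c₁ / c₂ + 1 ≤ c₁ / 3)
    (γ η τ θ : ℕ → ℝ)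
    (x xm : ℕ → Euc n) (lam lamm : ℕ → Euc m)
    (hηt : ∀ t, η t = c₁ * L
      + c₂ * Lg * (Finset.range (t + 1)).sup' Finset.nonempty_range_add_one fun i => ‖lam i‖)
    (hγt : ∀ t, γ t = η 0 / η t)
    (hθt : ∀ t, θ (t + 1) = γ t / γ (t + 1))
    (hτt : ∀ t, τ t = 12 * Mg ^ 2 / (c₁ ^ 2 * L ^ 2) * η t)
    -- iterates
    (hx0 : x 0 ∈ X) (hxm0 : xm 0 = x 0) (hxm : ∀ t, xm (t + 1) = x t)
    (hlam0 : lam 0 = 0) (hlamm0 : lamm 0 = lam 0) (hlamm : ∀ t, lamm (t + 1) = lam t)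
    -- λ update
    (hlamPos : ∀ t, ∀ j, 0 ≤ lam (t + 1) j)
    (hlamMin : ∀ t, ∀ lam' : Euc m, (∀ j, 0 ≤ lam' j) →
      ⟪-((1 + θ t) • g (x t) - θ t • g (xm t)), lam (t + 1)⟫_ℝ
          + τ t / 2 * ‖lam (t + 1) - lam t‖ ^ 2
        ≤ ⟪-((1 + θ t) • g (x t) - θ t • g (xm t)), lam'⟫_ℝ
          + τ t / 2 * ‖lam' - lam t‖ ^ 2)
    -- x update
    (hxS : ∀ t, x (t + 1) ∈ X)
    (hxMin : ∀ t, ∀ y ∈ X,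
      ⟪(1 + θ t) • (F (x t) + gradMul (Gg (x t)) (lam t))
          - θ t • (F (xm t) + gradMul (Gg (xm t)) (lamm t)), x (t + 1)⟫_ℝ
          + η t / 2 * ‖x (t + 1) - x t‖ ^ 2
        ≤ ⟪(1 + θ t) • (F (x t) + gradMul (Gg (x t)) (lam t))
          - θ t • (F (xm t) + gradMul (Gg (xm t)) (lamm t)), y⟫_ℝ
          + η t / 2 * ‖y - x t‖ ^ 2) :
    (∀ t : ℕ, ‖lam (t + 1)‖
      ≤ Real.sqrt (2 / (12 * Mg ^ 2 / (c₁ ^ 2 * L ^ 2))) * ‖x 0 - xstar‖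
        + (Real.sqrt 2 + 1) * ‖lamstar‖)
    ∧ (∀ T : ℕ, 1 ≤ T → ∀ z ∈ X, (∀ j, g z j ≤ 0) →
      (∑ t ∈ Finset.range T, γ t) *
        ⟪F z, (∑ t ∈ Finset.range T, γ t)⁻¹ • (∑ t ∈ Finset.range T, γ t • x (t + 1))
          - z⟫_ℝ
        ≤ c₁ * L / 2 * ‖z - x 0‖ ^ 2)
    ∧ (∀ T : ℕ, 1 ≤ T →
      (∑ t ∈ Finset.range T, γ t) *
        ‖posPart (g ((∑ t ∈ Finset.range T, γ t)⁻¹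
            • (∑ t ∈ Finset.range T, γ t • x (t + 1))))‖
        ≤ c₁ * L / 2 * ‖xstar - x 0‖ ^ 2
          + 12 * Mg ^ 2 / (c₁ ^ 2 * L ^ 2) * c₁ * L / 2 * (‖lamstar‖ + 1) ^ 2)
    ∧ (∀ T : ℕ, 1 ≤ T →
      c₁ * L * T / (c₁ * L + c₂ * Lg
          * (Real.sqrt (2 / (12 * Mg ^ 2 / (c₁ ^ 2 * L ^ 2))) * ‖x 0 - xstar‖
            + (Real.sqrt 2 + 1) * ‖lamstar‖))
        ≤ ∑ t ∈ Finset.range T, γ t) := by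
  set β := 12 * Mg ^ 2 / (c₁ ^ 2 * L ^ 2) with hβ_def
  have hH : 0 < c₁ * L := by positivity
  have hβ : 0 < β := by positivity
  have hMgβ : 12 * Mg ^ 2 = β * (c₁ * L) ^ 2 := by rw [hβ_def]; field_simp
  have run : IsAdLagExRun X F g Gg θ η τ x xm lam lamm :=
    ⟨hx0, hxS, hxm0, hxm, hlam0, hlamPos, hlamm0, hlamm, hlamMin, hxMin⟩
  obtain ⟨hc₁3, hc₂3⟩ := three_le_of_div_add_one_le hc₁ hc₂ hc
  have hη t := adaptive_stepsize_bounds hc₁3 hc₂3 hLpos.le hLg (fun i => norm_nonneg (lam i)) hηt t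
  have hγ t : γ t = c₁ * L / η t := by rw [hγt, hηt 0]; simp [hlam0]
  have hγpos t : 0 < γ t := by rw [hγ]; exact div_pos hH (hH.trans_le (hη t).1)
  have hγη t : γ t * η t = c₁ * L := by rw [hγ]; exact div_mul_cancel₀ _ (hH.trans_le (hη t).1).ne'
  have hcross t (w : Euc n) (ω : Euc m) :=
    abs_mul_inner_sub_inner_le (w := w) (ω := ω) hH hβ hMgpos.le hMgβ (hγpos t).le (hγη t)
      (hη t).1 (hη t).2 (norm_nonneg _) (norm_nonneg _)
      (norm_lagrangian_grad_sub_le hFlip hGgbd hGglip (run.x_mem (t + 1)) (run.x_mem t)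
        (lam (t + 1)) _)
      (hglip _ (run.x_mem (t + 1)) _ (run.x_mem t))
  have hgap (T : ℕ) (y : Euc n) (hy : y ∈ X) (l : Euc m) (hl : ∀ j, 0 ≤ l j) :=
    run.sum_gap_le hXconv hFmono hgconv hH.le (fun t => (hγpos t).le) hγη
    (fun t => by rw [hτt, ← hγη t]; ring)
    (fun t => by rw [hθt]; exact mul_div_cancel₀ _ (hγpos (t + 1)).ne') hcross T hy hl
  obtain ⟨hgstar, hsaddle⟩ := feasible_and_gap_nonneg_of_saddle hlamstar hsaddle₁ hsaddle₂
  have hbound := norm_multiplier_le hH hβ hγpos hlamPos hgap hxS hxstar hlamstar hgstar hsaddle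
  refine ⟨hbound, fun T hT z hz hgz =>
    mul_inner_centerMass_sub_le hH hβ hγpos hlamPos hgap hT hz hgz, fun T hT => ?_, fun T hT => ?_⟩
  · have := mul_norm_posPart_centerMass_le hH hβ hγpos hlamPos hgap hXconv hxS hgconv hxstar
      hlamstar hgstar hsaddle hT
    rwa [← mul_assoc β] at this
  · refine mul_div_add_le_sum hH hγη (fun t => (hη t).1) (fun t => ?_) T
    rw [hηt]
    gcongr
    exact sup'_le _ _ fun i _ => i.casesOn (by simp only [hlam0, norm_zero]; positivity) fun i => hbound i

/-- **Theorem 5.2 of the paper.** Convergence of the Adaptive Lagrangian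
Extrapolation (AdLagEx) method with the adaptive step-size policy, for smooth
deterministic FCVI problems. -/
theorem adlagex_convergence
    {n m : ℕ}
    (X : Set (Euc n)) (hXne : X.Nonempty) (hXcomp : IsCompact X) (hXconv : Convex ℝ X)
    -- smooth monotone operator
    (F : Euc n → Euc n) (L : ℝ) (hLpos : 0 < L)
    (hFmono : ∀ x₁ ∈ X, ∀ x₂ ∈ X, 0 ≤ ⟪F x₁ - F x₂, x₁ - x₂⟫_ℝ)
    (hFlip : ∀ x₁ ∈ X, ∀ x₂ ∈ X, ‖F x₁ - F x₂‖ ≤ L * ‖x₁ - x₂‖)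
    -- smooth convex constraints
    (g : Euc n → Euc m) (Gg : Euc n → Fin m → Euc n)
    (Mg Lg : ℝ) (hMgpos : 0 < Mg) (hLg : 0 ≤ Lg)
    (hgconv : ∀ x ∈ X, ∀ y ∈ X, ∀ j, g x j + ⟪Gg x j, y - x⟫_ℝ ≤ g y j)
    (hglip : ∀ x₁ ∈ X, ∀ x₂ ∈ X, ‖g x₁ - g x₂‖ ≤ Mg * ‖x₁ - x₂‖)
    (hGgbd : ∀ x ∈ X, ∀ μ : Euc m, ‖gradMul (Gg x) μ‖ ≤ Mg * ‖μ‖)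
    (hGglip : ∀ x₁ ∈ X, ∀ x₂ ∈ X, ∀ μ : Euc m,
      ‖gradMul (Gg x₁) μ - gradMul (Gg x₂) μ‖ ≤ Lg * ‖μ‖ * ‖x₁ - x₂‖)
    (hXtne : ∃ x ∈ X, ∀ j, g x j ≤ 0)
    -- KKT pair
    (xstar : Euc n) (lamstar : Euc m) (hxstar : xstar ∈ X) (hlamstar : ∀ j, 0 ≤ lamstar j)
    (hsaddle₁ : ∀ x ∈ X,
      ⟪F xstar, xstar⟫_ℝ + ⟪lamstar, g xstar⟫_ℝ ≤ ⟪F xstar, x⟫_ℝ + ⟪lamstar, g x⟫_ℝ)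
    (hsaddle₂ : ∀ lam' : Euc m, (∀ j, 0 ≤ lam' j) →
      ⟪lam', g xstar⟫_ℝ ≤ ⟪lamstar, g xstar⟫_ℝ)
    -- adaptive step-size policy
    (c₁ c₂ : ℝ) (hc₁ : 0 < c₁) (hc₂ : 0 < c₂) (hc : c₁ / c₂ + 1 ≤ c₁ / 3)
    (γ η τ θ : ℕ → ℝ)
    (x xm : ℕ → Euc n) (lam lamm : ℕ → Euc m)
    (hηt : ∀ t, η t = c₁ * L
      + c₂ * Lg * (Finset.range (t + 1)).sup' Finset.nonempty_range_add_one fun i => ‖lam i‖)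
    (hγt : ∀ t, γ t = η 0 / η t)
    (hθ0 : θ 0 = 1) (hθt : ∀ t, θ (t + 1) = γ t / γ (t + 1))
    (hτt : ∀ t, τ t = 12 * Mg ^ 2 / (c₁ ^ 2 * L ^ 2) * η t)
    -- iterates
    (hx0 : x 0 ∈ X) (hxm0 : xm 0 = x 0) (hxm : ∀ t, xm (t + 1) = x t)
    (hlam0 : lam 0 = 0) (hlamm0 : lamm 0 = lam 0) (hlamm : ∀ t, lamm (t + 1) = lam t)
    -- λ update
    (hlamPos : ∀ t, ∀ j, 0 ≤ lam (t + 1) j)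
    (hlamMin : ∀ t, ∀ lam' : Euc m, (∀ j, 0 ≤ lam' j) →
      ⟪-((1 + θ t) • g (x t) - θ t • g (xm t)), lam (t + 1)⟫_ℝ
          + τ t / 2 * ‖lam (t + 1) - lam t‖ ^ 2
        ≤ ⟪-((1 + θ t) • g (x t) - θ t • g (xm t)), lam'⟫_ℝ
          + τ t / 2 * ‖lam' - lam t‖ ^ 2)
    -- x update
    (hxS : ∀ t, x (t + 1) ∈ X)
    (hxMin : ∀ t, ∀ y ∈ X,
      ⟪(1 + θ t) • (F (x t) + gradMul (Gg (x t)) (lam t))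
          - θ t • (F (xm t) + gradMul (Gg (xm t)) (lamm t)), x (t + 1)⟫_ℝ
          + η t / 2 * ‖x (t + 1) - x t‖ ^ 2
        ≤ ⟪(1 + θ t) • (F (x t) + gradMul (Gg (x t)) (lam t))
          - θ t • (F (xm t) + gradMul (Gg (xm t)) (lamm t)), y⟫_ℝ
          + η t / 2 * ‖y - x t‖ ^ 2) :
    (∀ t : ℕ, ‖lam (t + 1)‖
      ≤ Real.sqrt (2 / (12 * Mg ^ 2 / (c₁ ^ 2 * L ^ 2))) * ‖x 0 - xstar‖
        + (Real.sqrt 2 + 1) * ‖lamstar‖)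
    ∧ (∀ T : ℕ, 1 ≤ T → ∀ z ∈ X, (∀ j, g z j ≤ 0) →
      (∑ t ∈ Finset.range T, γ t) *
        ⟪F z, (∑ t ∈ Finset.range T, γ t)⁻¹ • (∑ t ∈ Finset.range T, γ t • x (t + 1))
          - z⟫_ℝ
        ≤ c₁ * L / 2 * ‖z - x 0‖ ^ 2)
    ∧ (∀ T : ℕ, 1 ≤ T →
      (∑ t ∈ Finset.range T, γ t) *
        ‖posPart (g ((∑ t ∈ Finset.range T, γ t)⁻¹
            • (∑ t ∈ Finset.range T, γ t • x (t + 1))))‖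
        ≤ c₁ * L / 2 * ‖xstar - x 0‖ ^ 2
          + 12 * Mg ^ 2 / (c₁ ^ 2 * L ^ 2) * c₁ * L / 2 * (‖lamstar‖ + 1) ^ 2)
    ∧ (∀ T : ℕ, 1 ≤ T →
      c₁ * L * T / (c₁ * L + c₂ * Lg
          * (Real.sqrt (2 / (12 * Mg ^ 2 / (c₁ ^ 2 * L ^ 2))) * ‖x 0 - xstar‖
            + (Real.sqrt 2 + 1) * ‖lamstar‖))
        ≤ ∑ t ∈ Finset.range T, γ t) :=
  adlagex_convergence_general X hXconv F L hLpos hFmono hFlip g Gg Mg Lg hMgpos hLg hgconv hglip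
    hGgbd hGglip xstar lamstar hxstar hlamstar hsaddle₁ hsaddle₂ c₁ c₂ hc₁ hc₂ hc γ η τ θ x xm lam
    lamm hηt hγt hθt hτt hx0 hxm0 hxm hlam0 hlamm0 hlamm hlamPos hlamMin hxS hxMin

end
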